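/- arXiv:1811.03185 — 3 statements merged into one kernel-verified Lean document; each statement's English description precedes it below -/
import Mathlib

section
/- Let A be a finite alphabet, let F ⊆ A* be a recurrent set, and let X be a bifix code contained in F. Then the F-degree d_F(X) is finite if and only if X is an F-thin and F-maximal bifix code. Moreover, in this case, a word w ∈ F is an internal factor of a word of X (i.e., xwy ∈ X for some nonempty words x, y) if and only if δ_X(w) < d_F(X). -/
/-! Common definitions: words over a finite alphabet `A` are terms of `List A`,
concatenation being the monoid operation of the free monoid `A*`. -/

namespace PaperDefs

variable {A : Type*}

/-- `w` belongs to the Kleene star `X*` of `X`: it is a (possibly empty)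
concatenation of elements of `X`. -/
def InStar (X : Set (List A)) (w : List A) : Prop :=
  ∃ l : List (List A), (∀ u ∈ l, u ∈ X) ∧ l.flatten = w

/-- The language `X*`. -/
def star (X : Set (List A)) : Set (List A) := {w | InStar X w}

/-- A prefix code: a nonempty set of nonempty words, none of which is a proper
prefix of another. -/
def IsPrefixCode (X : Set (List A)) : Prop :=
  X.Nonempty ∧ (∀ w ∈ X, w ≠ []) ∧ ∀ u ∈ X, ∀ v ∈ X, u <+: v → u = v

/-- A suffix code. -/
def IsSuffixCode (X : Set (List A)) : Prop :=
  X.Nonempty ∧ (∀ w ∈ X, w ≠ []) ∧ ∀ u ∈ X, ∀ v ∈ X, u <:+ v → u = v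

/-- A bifix code. -/
def IsBifixCode (X : Set (List A)) : Prop := IsPrefixCode X ∧ IsSuffixCode X

/-- A factorial set contains all factors of its elements. -/
def Factorial (F : Set (List A)) : Prop := ∀ w ∈ F, ∀ u, u <:+: w → u ∈ F

/-- A recurrent set. -/
def Recurrent (F : Set (List A)) : Prop :=
  Factorial F ∧ F.Nonempty ∧ F ≠ {[]} ∧ ∀ u ∈ F, ∀ v ∈ F, ∃ w, u ++ w ++ v ∈ F

/-- A uniformly recurrent set. -/
def UniformlyRecurrent (F : Set (List A)) : Prop :=
  Recurrent F ∧ ∀ u ∈ F, ∃ n : ℕ, ∀ w ∈ F, n ≤ w.length → u <:+: w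

/-- A parse of `w` with respect to `X` : a triple `(v, x, u)` with `w = v x u`,
`v` has no suffix in `X`, `x ∈ X*`, and `u` has no prefix in `X`. -/
def IsParse (X : Set (List A)) (w : List A) (p : List A × List A × List A) : Prop :=
  p.1 ++ p.2.1 ++ p.2.2 = w ∧ (¬ ∃ s ∈ X, s <:+ p.1) ∧ InStar X p.2.1 ∧
    ¬ ∃ s ∈ X, s <+: p.2.2

/-- `δ_X(w)`, the number of parses of `w` with respect to `X`. -/
noncomputable def delta (X : Set (List A)) (w : List A) : ℕ :=
  {p | IsParse X w p}.ncard

/-- The `F`-degree `d_F(X)` of `X`, as an extended natural number. -/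
noncomputable def Fdeg (X F : Set (List A)) : ℕ∞ :=
  ⨆ w ∈ F, (delta X w : ℕ∞)

/-- The degree `d(X)` of `X`. -/
noncomputable def deg (X : Set (List A)) : ℕ∞ := Fdeg X Set.univ

/-- An `F`-maximal bifix code. -/
def IsFMaximalBifixCode (F X : Set (List A)) : Prop :=
  IsBifixCode X ∧ X ⊆ F ∧ ∀ Y : Set (List A), IsBifixCode Y → Y ⊆ F → X ⊆ Y → Y = X

/-- An `F`-maximal prefix code. -/
def IsFMaximalPrefixCode (F X : Set (List A)) : Prop :=
  IsPrefixCode X ∧ X ⊆ F ∧ ∀ Y : Set (List A), IsPrefixCode Y → Y ⊆ F → X ⊆ Y → Y = X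

/-- `X` is `F`-thin: some word of `F` is not a factor of any element of `X`. -/
def FThin (F X : Set (List A)) : Prop := ∃ w ∈ F, ∀ x ∈ X, ¬ w <:+: x

/-- A rational (regular) language. -/
def IsRational (L : Set (List A)) : Prop :=
  ∃ (σ : Type) (_ : Fintype σ) (M : DFA A σ), ∀ w : List A, w ∈ M.accepts ↔ w ∈ L

/-- The syntactic congruence of the language `L`. -/
def SynEquiv (L : Set (List A)) (u v : List A) : Prop :=
  ∀ x y : List A, x ++ u ++ y ∈ L ↔ x ++ v ++ y ∈ L

/-- `η : A* → M` is (a realization of) the syntactic homomorphism onto the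
syntactic monoid of `L`. -/
structure IsSyntacticHom (L : Set (List A)) {M : Type*} [Monoid M] (η : List A → M) : Prop where
  map_nil : η [] = 1
  map_append : ∀ u v : List A, η (u ++ v) = η u * η v
  surj : Function.Surjective η
  syn : ∀ u v : List A, η u = η v ↔ SynEquiv L u v

section Green

variable {M : Type*} [Monoid M]

/-- The `J`-order: `MuM ⊆ MvM`. -/
def JLe (u v : M) : Prop := ∃ x y, u = x * v * y

/-- Green's relation `J`. -/
def JEquiv (u v : M) : Prop := JLe u v ∧ JLe v u

/-- Green's relation `R`. -/
def REquiv (u v : M) : Prop := (∃ x, v = u * x) ∧ (∃ x, u = v * x)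

/-- Green's relation `L`. -/
def LEquiv (u v : M) : Prop := (∃ x, v = x * u) ∧ (∃ x, u = x * v)

/-- Green's relation `H`. -/
def HEquiv (u v : M) : Prop := REquiv u v ∧ LEquiv u v

/-- Green's relation `D`. -/
def DEquiv (u v : M) : Prop := ∃ s, REquiv u s ∧ LEquiv s v

/-- The `H`-class of an element. -/
def HClass (e : M) : Set M := {m | HEquiv m e}

/-- Membership in the minimum ideal (minimum `J`-class) of `M`. -/
def InMinIdeal (m : M) : Prop := ∀ n : M, JLe m n

/-- `S` is a subgroup of the monoid `M`: a subsemigroup which is a group. -/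
def IsSubgroupIn (S : Set M) : Prop :=
  S.Nonempty ∧ (∀ x ∈ S, ∀ y ∈ S, x * y ∈ S) ∧
    ∃ e ∈ S, (∀ x ∈ S, e * x = x ∧ x * e = x) ∧ ∀ x ∈ S, ∃ y ∈ S, x * y = e ∧ y * x = e

/-- The subsets `S ⊆ M` and `T ⊆ N` (each closed under multiplication, e.g.
maximal subgroups) are isomorphic as groups: there is a multiplicative
bijection from `S` onto `T`. -/
def GroupIsoOn {N : Type*} [Monoid N] (S : Set M) (T : Set N) : Prop :=
  ∃ φ : M → N, Set.BijOn φ S T ∧ ∀ x ∈ S, ∀ y ∈ S, φ (x * y) = φ x * φ y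

end Green

/-- `m` belongs to `J_F(X)`, the minimum `J`-class of the syntactic monoid of
`X*` meeting the image of `F` under the syntactic homomorphism `η`. -/
def InFMinJ {M : Type*} [Monoid M] (η : List A → M) (F : Set (List A)) (m : M) : Prop :=
  (∃ w ∈ F, JEquiv m (η w)) ∧ ∀ w ∈ F, JLe m (η w)

/-- A group code: a prefix code `Z` defined by a transitive permutation
representation of `A*` on a finite set, `Z*` being the stabilizer of a point. -/
def IsGroupCode (Z : Set (List A)) : Prop :=
  IsPrefixCode Z ∧
  ∃ (Q : Type) (_ : Fintype Q) (q₀ : Q) (α : List A → Equiv.Perm Q),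
    α [] = 1 ∧ (∀ u v : List A, α (u ++ v) = α u * α v) ∧
    (∀ q q' : Q, ∃ w : List A, α w q = q') ∧
    (∀ w : List A, InStar Z w ↔ α w q₀ = q₀) ∧
    Z = {w : List A | α w q₀ = q₀ ∧ w ≠ [] ∧
          ¬ ∃ u v : List A, u ≠ [] ∧ v ≠ [] ∧ α u q₀ = q₀ ∧ α v q₀ = q₀ ∧ w = u ++ v}

/-- Vertices of the extension graph of `w` in `F`: the disjoint union of
`L(w)` and `R(w)`. -/
def ExtVertex (F : Set (List A)) (w : List A) : Sum A A → Prop :=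
  fun x => Sum.elim (fun a => a :: w ∈ F) (fun b => w ++ [b] ∈ F) x

/-- The edge relation of the extension graph of `w` in `F`. -/
def ExtRel (F : Set (List A)) (w : List A) : Sum A A → Sum A A → Prop :=
  fun x y =>
    match x, y with
    | Sum.inl a, Sum.inr b => a :: (w ++ [b]) ∈ F
    | _, _ => False

/-- The extension graph `G(w)` of `w` in `F`. -/
def extGraph (F : Set (List A)) (w : List A) :
    SimpleGraph {x : Sum A A // ExtVertex F w x} :=
  SimpleGraph.fromRel fun x y => ExtRel F w x.1 y.1

/-- `F` is connected: every extension graph of a word of `F` is connected. -/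
def ConnectedSet (F : Set (List A)) : Prop :=
  ∀ w ∈ F, (extGraph F w).Connected

/-- `F` is a tree set: every extension graph of a word of `F` is a tree. -/
def TreeSet (F : Set (List A)) : Prop :=
  ∀ w ∈ F, (extGraph F w).IsTree

/-- The alphabet of `F` is the whole of `A`. -/
def AlphabetIs (F : Set (List A)) : Prop := ∀ a : A, [a] ∈ F

/-- The left quotient `u⁻¹L`, i.e. the state reached from the initial state of
the minimal automaton of `L` by reading `u`. -/
def leftQuot (L : Set (List A)) (u : List A) : Set (List A) := {w | u ++ w ∈ L}

/-- The set of states of the minimal automaton of `L`: the nonempty left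
quotients of `L`. -/
def MinStates (L : Set (List A)) : Set (Set (List A)) :=
  {q | q.Nonempty ∧ ∃ u : List A, q = leftQuot L u}

/-- The (partial) transition of the minimal automaton: `q · v`; it is defined
when the resulting set is nonempty. -/
def stepW (q : Set (List A)) (v : List A) : Set (List A) := {w | v ++ w ∈ q}

/-- The rank of the word `v` in the minimal automaton of `L`: the number of
distinct states `q · v` with `q` a state such that `q · v` is defined. -/
noncomputable def wordRank (L : Set (List A)) (v : List A) : ℕ :=
  ((fun q => stepW q v) '' {q ∈ MinStates L | (stepW q v).Nonempty}).ncard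

/-- The set of first return words of `F` to `u`. -/
def ReturnWords (F : Set (List A)) (u : List A) : Set (List A) :=
  {v | v ≠ [] ∧ u ++ v ∈ F ∧ u <:+ u ++ v ∧
    ¬ ∃ x y : List A, x ≠ [] ∧ y ≠ [] ∧ u ++ v = x ++ u ++ y}

/-- A code: every word has at most one factorization into elements of `X`. -/
def IsCode (X : Set (List A)) : Prop :=
  ∀ l m : List (List A), (∀ u ∈ l, u ∈ X) → (∀ u ∈ m, u ∈ X) →
    l.flatten = m.flatten → l = m

/-- The set `I = Q_X · K` of images of states of the minimal automaton of `L`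
under (partial) transitions by words whose syntactic image lies in `K`. -/
def ImageSet (L : Set (List A)) {M : Type*} [Monoid M] (η : List A → M) (K : Set M) :
    Set (Set (List A)) :=
  {p | ∃ q ∈ MinStates L, ∃ v : List A, η v ∈ K ∧ (stepW q v).Nonempty ∧ p = stepW q v}

/-- A witness for "a finite monoid `M` together with a monoid homomorphism
`A* → M`". -/
structure FiniteMonoidHomWitness (A : Type*) where
  M : Type
  [fin : Fintype M]
  [mon : Monoid M]
  φ : List A → M
  map_nil : φ [] = 1
  map_append : ∀ u v : List A, φ (u ++ v) = φ u * φ v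

end PaperDefs
open PaperDefs

namespace Stmt9Aux

variable {A : Type*} {X : Set (List A)}

/-- no prefix in X -/
def NoPre (X : Set (List A)) (u : List A) : Prop := ¬ ∃ s ∈ X, s <+: u
/-- no suffix in X -/
def NoSuf (X : Set (List A)) (u : List A) : Prop := ¬ ∃ s ∈ X, s <:+ u

def Pset (X : Set (List A)) (w : List A) : Set (List A) := {p | p <+: w ∧ NoSuf X p}
def Sset (X : Set (List A)) (w : List A) : Set (List A) := {s | s <:+ w ∧ NoPre X s}

lemma finite_prefixes (w : List A) : {p : List A | p <+: w}.Finite := by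
  apply Set.Finite.subset (List.finite_toSet w.inits)
  intro p hp; simpa [List.mem_inits] using hp

lemma finite_suffixes (w : List A) : {p : List A | p <:+ w}.Finite := by
  apply Set.Finite.subset (List.finite_toSet w.tails)
  intro p hp; simpa [List.mem_tails] using hp

lemma finite_Pset (X : Set (List A)) (w : List A) : (Pset X w).Finite :=
  (finite_prefixes w).subset (fun p hp => hp.1)

lemma finite_Sset (X : Set (List A)) (w : List A) : (Sset X w).Finite :=
  (finite_suffixes w).subset (fun p hp => hp.1)

lemma ncard_prefixes_le (w : List A) : {p : List A | p <+: w}.ncard ≤ w.length + 1 := by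
  classical
  have h1 : {p : List A | p <+: w} ⊆ (w.inits.toFinset : Set (List A)) := by
    intro p hp; simp [List.mem_inits]; exact hp
  calc {p : List A | p <+: w}.ncard ≤ (w.inits.toFinset : Set (List A)).ncard :=
        Set.ncard_le_ncard h1 (w.inits.toFinset : Finset (List A)).finite_toSet
    _ = w.inits.toFinset.card := Set.ncard_coe_finset _
    _ ≤ w.inits.length := List.toFinset_card_le _
    _ = w.length + 1 := by simp

lemma ncard_suffixes_le (w : List A) : {p : List A | p <:+ w}.ncard ≤ w.length + 1 := by
  classical
  have h1 : {p : List A | p <:+ w} ⊆ (w.tails.toFinset : Set (List A)) := by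
    intro p hp; simp [List.mem_tails]; exact hp
  calc {p : List A | p <:+ w}.ncard ≤ (w.tails.toFinset : Set (List A)).ncard :=
        Set.ncard_le_ncard h1 (w.tails.toFinset : Finset (List A)).finite_toSet
    _ = w.tails.toFinset.card := Set.ncard_coe_finset _
    _ ≤ w.tails.length := List.toFinset_card_le _
    _ = w.length + 1 := by simp

lemma instar_single (h : x ∈ X) : InStar X x := ⟨[x], by simpa using h, by simp⟩

lemma instar_append {x y : List A} (h1 : InStar X x) (h2 : InStar X y) : InStar X (x ++ y) := by
  obtain ⟨l, hl, rfl⟩ := h1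
  obtain ⟨m, hm, rfl⟩ := h2
  exact ⟨l ++ m, by intro u hu; rcases List.mem_append.1 hu with h | h; exacts [hl u h, hm u h],
    by simp⟩

lemma instar_cons {x y : List A} (h : x ∈ X) (h2 : InStar X y) : InStar X (x ++ y) :=
  instar_append (instar_single h) h2

lemma instar_snoc {x y : List A} (h2 : InStar X y) (h : x ∈ X) : InStar X (y ++ x) :=
  instar_append h2 (instar_single h)

end Stmt9Aux
namespace Stmt9Aux

variable {A : Type*} {X : Set (List A)}

lemma greedy_left (hne : ∀ w ∈ X, w ≠ ([] : List A)) (t : List A) :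
    ∃ x u : List A, x ++ u = t ∧ InStar X x ∧ NoPre X u := by
  obtain ⟨n, hn⟩ : ∃ n, t.length ≤ n := ⟨t.length, le_refl _⟩
  induction n generalizing t with
  | zero =>
    refine ⟨[], t, by simp, ⟨[], by simp, rfl⟩, ?_⟩
    rintro ⟨s, hs, hp⟩
    have := hp.length_le
    have : s = [] := List.length_eq_zero_iff.1 (by omega)
    exact hne s hs this
  | succ n ih =>
    by_cases h : ∃ s ∈ X, s <+: t
    · obtain ⟨s, hs, t', rfl⟩ := h
      have hslen : 0 < s.length := List.length_pos_iff.2 (hne s hs)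
      have ht' : t'.length ≤ n := by
        have := hn; simp [List.length_append] at this; omega
      obtain ⟨x, u, heq, hx, hu⟩ := ih t' ht'
      exact ⟨s ++ x, u, by simp [heq, List.append_assoc], instar_cons hs hx, hu⟩
    · exact ⟨[], t, by simp, ⟨[], by simp, rfl⟩, h⟩

lemma greedy_right (hne : ∀ w ∈ X, w ≠ ([] : List A)) (t : List A) :
    ∃ p x : List A, p ++ x = t ∧ NoSuf X p ∧ InStar X x := by
  obtain ⟨n, hn⟩ : ∃ n, t.length ≤ n := ⟨t.length, le_refl _⟩
  induction n generalizing t with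
  | zero =>
    refine ⟨t, [], by simp, ?_, ⟨[], by simp, rfl⟩⟩
    rintro ⟨s, hs, hp⟩
    have := hp.length_le
    have : s = [] := List.length_eq_zero_iff.1 (by omega)
    exact hne s hs this
  | succ n ih =>
    by_cases h : ∃ s ∈ X, s <:+ t
    · obtain ⟨s, hs, t', rfl⟩ := h
      have hslen : 0 < s.length := List.length_pos_iff.2 (hne s hs)
      have ht' : t'.length ≤ n := by
        have := hn; simp [List.length_append] at this; omega
      obtain ⟨p, x, heq, hp, hx⟩ := ih t' ht'
      exact ⟨p, x ++ s, by simp [← heq, List.append_assoc], hp, instar_snoc hx hs⟩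
    · exact ⟨t, [], by simp, h, ⟨[], by simp, rfl⟩⟩

lemma star_cancel_left (hpc : IsPrefixCode X) :
    ∀ (l m : List (List A)), (∀ u ∈ l, u ∈ X) → (∀ u ∈ m, u ∈ X) →
    ∀ u u' : List A, NoPre X u → NoPre X u' →
    l.flatten ++ u = m.flatten ++ u' → l.flatten = m.flatten := by
  intro l
  induction l with
  | nil =>
    intro m hl hm u u' hu hu' heq
    cases m with
    | nil => rfl
    | cons z m' =>
      exfalso
      apply hu
      refine ⟨z, hm z (by simp), ?_⟩
      rw [List.flatten_nil, List.nil_append] at heq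
      rw [heq, List.flatten_cons, List.append_assoc]
      exact ⟨_, rfl⟩
  | cons y l' ih =>
    intro m hl hm u u' hu hu' heq
    cases m with
    | nil =>
      exfalso
      apply hu'
      refine ⟨y, hl y (by simp), ?_⟩
      rw [List.flatten_nil, List.nil_append] at heq
      rw [← heq, List.flatten_cons, List.append_assoc]
      exact ⟨_, rfl⟩
    | cons z m' =>
      have hy : y <+: (y :: l').flatten ++ u := by
        rw [List.flatten_cons, List.append_assoc]; exact ⟨_, rfl⟩
      have hz : z <+: (y :: l').flatten ++ u := by
        rw [heq, List.flatten_cons, List.append_assoc]; exact ⟨_, rfl⟩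
      have hyz : y = z := by
        rcases List.prefix_or_prefix_of_prefix hy hz with h | h
        · exact hpc.2.2 y (hl y (by simp)) z (hm z (by simp)) h
        · exact (hpc.2.2 z (hm z (by simp)) y (hl y (by simp)) h).symm
      subst hyz
      have heq' : l'.flatten ++ u = m'.flatten ++ u' := by
        rw [List.flatten_cons, List.flatten_cons] at heq
        rw [List.append_assoc, List.append_assoc] at heq
        exact List.append_cancel_left heq
      have := ih m' (fun v hv => hl v (by simp [hv])) (fun v hv => hm v (by simp [hv]))
        u u' hu hu' heq'
      simp [List.flatten_cons, this]

lemma star_eq_left (hpc : IsPrefixCode X) {x x' u u' : List A}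
    (hx : InStar X x) (hx' : InStar X x') (hu : NoPre X u) (hu' : NoPre X u')
    (heq : x ++ u = x' ++ u') : x = x' ∧ u = u' := by
  obtain ⟨l, hl, rfl⟩ := hx
  obtain ⟨m, hm, rfl⟩ := hx'
  have h1 := star_cancel_left hpc l m hl hm u u' hu hu' heq
  refine ⟨h1, ?_⟩
  rw [h1] at heq
  exact List.append_cancel_left heq

lemma star_cancel_right (hsc : IsSuffixCode X) :
    ∀ (l m : List (List A)), (∀ u ∈ l, u ∈ X) → (∀ u ∈ m, u ∈ X) →
    ∀ u u' : List A, NoSuf X u → NoSuf X u' →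
    u ++ l.flatten = u' ++ m.flatten → l.flatten = m.flatten := by
  intro l
  induction l using List.reverseRecOn with
  | nil =>
    intro m hl hm u u' hu hu' heq
    rcases m.eq_nil_or_concat with rfl | ⟨m', z, rfl⟩
    · rfl
    · simp only [List.concat_eq_append] at hm heq ⊢
      exfalso
      apply hu
      refine ⟨z, hm z (by simp), ?_⟩
      rw [List.flatten_nil, List.append_nil] at heq
      rw [heq, List.flatten_concat, ← List.append_assoc]
      exact ⟨_, rfl⟩
  | append_singleton l' y ih =>
    intro m hl hm u u' hu hu' heq
    rcases m.eq_nil_or_concat with rfl | ⟨m', z, rfl⟩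
    · exfalso
      apply hu'
      refine ⟨y, hl y (by simp), ?_⟩
      rw [List.flatten_nil, List.append_nil] at heq
      rw [← heq, List.flatten_concat, ← List.append_assoc]
      exact ⟨_, rfl⟩
    · simp only [List.concat_eq_append] at hm heq ⊢
      have hy : y <:+ u ++ (l' ++ [y]).flatten := by
        rw [List.flatten_concat, ← List.append_assoc]; exact ⟨_, rfl⟩
      have hz : z <:+ u ++ (l' ++ [y]).flatten := by
        rw [heq, List.flatten_concat, ← List.append_assoc]; exact ⟨_, rfl⟩
      have hyz : y = z := by
        rcases List.suffix_or_suffix_of_suffix hy hz with h | h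
        · exact hsc.2.2 y (hl y (by simp)) z (hm z (by simp)) h
        · exact (hsc.2.2 z (hm z (by simp)) y (hl y (by simp)) h).symm
      subst hyz
      have heq' : u ++ l'.flatten = u' ++ m'.flatten := by
        rw [List.flatten_concat, List.flatten_concat, ← List.append_assoc,
          ← List.append_assoc] at heq
        exact List.append_cancel_right heq
      have h1 := ih m' (fun v hv => hl v (by simp [hv])) (fun v hv => hm v (by simp [hv]))
        u u' hu hu' heq'
      rw [List.flatten_concat, List.flatten_concat, h1]

lemma star_eq_right (hsc : IsSuffixCode X) {x x' u u' : List A}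
    (hx : InStar X x) (hx' : InStar X x') (hu : NoSuf X u) (hu' : NoSuf X u')
    (heq : u ++ x = u' ++ x') : x = x' ∧ u = u' := by
  obtain ⟨l, hl, rfl⟩ := hx
  obtain ⟨m, hm, rfl⟩ := hx'
  have h1 := star_cancel_right hsc l m hl hm u u' hu hu' heq
  refine ⟨h1, ?_⟩
  rw [h1] at heq
  exact List.append_cancel_right heq

end Stmt9Aux
namespace Stmt9Aux

variable {A : Type*} {X : Set (List A)}

lemma delta_eq_P (hX : IsBifixCode X) (w : List A) : delta X w = (Pset X w).ncard := by
  have himg : (fun p : List A × List A × List A => p.1) '' {p | IsParse X w p} = Pset X w := by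
    ext q
    constructor
    · rintro ⟨⟨v, x, u⟩, hp, rfl⟩
      obtain ⟨heq, hv, hx, hu⟩ := hp
      exact ⟨⟨x ++ u, by rw [← List.append_assoc]; exact heq⟩, hv⟩
    · rintro ⟨⟨t, rfl⟩, hq⟩
      obtain ⟨x, u, heq, hx, hu⟩ := greedy_left hX.1.2.1 t
      exact ⟨(q, x, u), ⟨by rw [List.append_assoc, heq], hq, hx, hu⟩, rfl⟩
  have hinj : Set.InjOn (fun p : List A × List A × List A => p.1) {p | IsParse X w p} := by
    rintro ⟨v, x, u⟩ ha ⟨v', x', u'⟩ hb h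
    simp only at h
    subst h
    obtain ⟨heqa, hva, hxa, hua⟩ := ha
    obtain ⟨heqb, hvb, hxb, hub⟩ := hb
    have : x ++ u = x' ++ u' := by
      apply List.append_cancel_left (as := v)
      rw [← List.append_assoc, ← List.append_assoc, heqa, heqb]
    obtain ⟨h1, h2⟩ := star_eq_left hX.1 hxa hxb hua hub this
    simp only [Prod.mk.injEq]
    exact ⟨trivial, h1, h2⟩
  rw [delta, ← himg, Set.ncard_image_of_injOn hinj]

lemma delta_eq_S (hX : IsBifixCode X) (w : List A) : delta X w = (Sset X w).ncard := by
  have himg : (fun p : List A × List A × List A => p.2.2) '' {p | IsParse X w p} = Sset X w := by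
    ext q
    constructor
    · rintro ⟨⟨v, x, u⟩, hp, rfl⟩
      obtain ⟨heq, hv, hx, hu⟩ := hp
      exact ⟨⟨v ++ x, heq⟩, hu⟩
    · rintro ⟨⟨t, rfl⟩, hq⟩
      obtain ⟨p, x, heq, hp, hx⟩ := greedy_right hX.1.2.1 t
      exact ⟨(p, x, q), ⟨by rw [heq], hp, hx, hq⟩, rfl⟩
  have hinj : Set.InjOn (fun p : List A × List A × List A => p.2.2) {p | IsParse X w p} := by
    rintro ⟨v, x, u⟩ ha ⟨v', x', u'⟩ hb h
    simp only at h
    subst h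
    obtain ⟨heqa, hva, hxa, hua⟩ := ha
    obtain ⟨heqb, hvb, hxb, hub⟩ := hb
    have : v ++ x = v' ++ x' := List.append_cancel_right (heqa.trans heqb.symm)
    obtain ⟨h1, h2⟩ := star_eq_right hX.2 hxa hxb hva hvb this
    simp only [Prod.mk.injEq]
    exact ⟨h2, h1, trivial⟩
  rw [delta, ← himg, Set.ncard_image_of_injOn hinj]

lemma delta_le_append_right (hX : IsBifixCode X) (w v : List A) :
    delta X w ≤ delta X (w ++ v) := by
  rw [delta_eq_P hX, delta_eq_P hX]
  exact Set.ncard_le_ncard (fun p hp => ⟨hp.1.trans ⟨v, rfl⟩, hp.2⟩) (finite_Pset X _)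

lemma delta_le_append_left (hX : IsBifixCode X) (w v : List A) :
    delta X w ≤ delta X (v ++ w) := by
  rw [delta_eq_S hX, delta_eq_S hX]
  exact Set.ncard_le_ncard (fun p hp => ⟨hp.1.trans ⟨v, rfl⟩, hp.2⟩) (finite_Sset X _)

lemma delta_pos (hX : IsBifixCode X) (w : List A) : 1 ≤ delta X w := by
  rw [delta_eq_P hX]
  refine (Set.ncard_pos (finite_Pset X w)).2 ⟨[], ⟨⟨w, rfl⟩, ?_⟩⟩
  rintro ⟨s, hs, hsuf⟩
  exact hX.1.2.1 s hs (List.suffix_nil.1 hsuf)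

/-- the key strict inequality: an internal factor has strictly fewer parses -/
lemma delta_internal_lt (hX : IsBifixCode X) {u w v : List A}
    (hx : u ++ w ++ v ∈ X) (hu : u ≠ []) (hv : v ≠ []) :
    delta X w < delta X (u ++ w ++ v) := by
  have h1 : delta X w < delta X (u ++ w) := by
    rw [delta_eq_S hX, delta_eq_S hX]
    apply Set.ncard_lt_ncard _ (finite_Sset X _)
    constructor
    · exact fun p hp => ⟨hp.1.trans ⟨u, rfl⟩, hp.2⟩
    · intro hsub
      by_cases hnp : NoPre X (u ++ w)
      · have hmem : u ++ w ∈ Sset X w := hsub ⟨List.suffix_refl _, hnp⟩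
        have hlen := hmem.1.length_le
        rw [List.length_append] at hlen
        exact hu (List.length_eq_zero_iff.1 (by omega))
      · obtain ⟨t, ht, htp⟩ := Classical.not_not.1 hnp
        have htp2 : t <+: u ++ w ++ v := htp.trans ⟨v, rfl⟩
        have heqt := hX.1.2.2 t ht _ hx htp2
        subst heqt
        have hlen := htp.length_le
        simp only [List.length_append] at hlen
        exact hv (List.length_eq_zero_iff.1 (by omega))
  have h2 : delta X (u ++ w) ≤ delta X (u ++ w ++ v) := delta_le_append_right hX _ _
  omega

end Stmt9Aux
namespace Stmt9Aux

variable {A : Type*} {X F : Set (List A)}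

/-- prefix-comparable with X -/
def PC (X : Set (List A)) (q : List A) : Prop := ∃ x ∈ X, x <+: q ∨ q <+: x
/-- suffix-comparable with X -/
def SC (X : Set (List A)) (q : List A) : Prop := ∃ x ∈ X, x <:+ q ∨ q <:+ x

lemma le_Fdeg {w : List A} (hw : w ∈ F) : (delta X w : ℕ∞) ≤ Fdeg X F :=
  le_biSup (fun v => (delta X v : ℕ∞)) hw

lemma Fdeg_le {n : ℕ} (h : ∀ w ∈ F, delta X w ≤ n) : Fdeg X F ≤ (n : ℕ∞) :=
  iSup₂_le fun w hw => by exact_mod_cast h w hw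

lemma Fdeg_ne_top_of_bound {n : ℕ} (h : ∀ w ∈ F, delta X w ≤ n) : Fdeg X F ≠ ⊤ := by
  intro ht
  have := Fdeg_le h
  rw [ht] at this
  exact (ENat.coe_lt_top n).not_ge this

lemma bound_of_ne_top (hd : Fdeg X F ≠ ⊤) : ∃ n : ℕ, ∀ w ∈ F, delta X w ≤ n := by
  lift Fdeg X F to ℕ using hd with n hn
  exact ⟨n, fun w hw => by exact_mod_cast hn ▸ le_Fdeg hw⟩

lemma attain (hX : IsBifixCode X) (hd : Fdeg X F ≠ ⊤) (hne : F.Nonempty) :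
    ∃ w ∈ F, (delta X w : ℕ∞) = Fdeg X F := by
  have hd' := hd
  lift Fdeg X F to ℕ using hd with n hn
  have hle : ∀ w ∈ F, delta X w ≤ n := fun w hw => by exact_mod_cast hn ▸ le_Fdeg hw
  by_contra hc
  push_neg at hc
  have hlt : ∀ w ∈ F, delta X w ≤ n - 1 := by
    intro w hw
    have h1 := hle w hw
    have h2 : (delta X w : ℕ∞) ≠ (n : ℕ∞) := hn ▸ hc w hw
    have : delta X w ≠ n := fun h => h2 (by exact_mod_cast h)
    omega
  have hb := Fdeg_le hlt
  rw [← hn] at hb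
  have hb' : n ≤ n - 1 := by exact_mod_cast hb
  obtain ⟨w, hw⟩ := hne
  have := delta_pos hX w
  have := hle w hw
  have := hlt w hw
  omega

lemma finite_Sq (u q : List A) : {s : List A | s <:+ u ∧ q <+: s ∧ NoPre X s}.Finite :=
  (finite_suffixes u).subset (fun s hs => hs.1)

/-- Key lemma: if the F-degree is finite, every nonempty word of F is
prefix-comparable with X. -/
lemma pc_of_ne_top (hF : Recurrent F) (hX : IsBifixCode X)
    (hd : Fdeg X F ≠ ⊤) : ∀ q ∈ F, q ≠ [] → PC X q := by
  intro q hqF hqne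
  by_contra hq
  have hcomp : ∀ x ∈ X, ¬ x <+: q ∧ ¬ q <+: x :=
    fun x hx => ⟨fun h => hq ⟨x, hx, Or.inl h⟩, fun h => hq ⟨x, hx, Or.inr h⟩⟩
  set Sq : List A → Set (List A) := fun u => {s | s <:+ u ∧ q <+: s ∧ NoPre X s} with hSq
  have hNoPreq : NoPre X q := by
    rintro ⟨x, hx, hp⟩
    exact (hcomp x hx).1 hp
  have claim : ∀ n : ℕ, ∃ u ∈ F, n + 1 ≤ (Sq u).ncard := by
    intro n
    induction n with
    | zero =>
      refine ⟨q, hqF, ?_⟩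
      refine (Set.ncard_pos (finite_Sq q q)).2 ⟨q, List.suffix_refl q, List.prefix_refl q, hNoPreq⟩
    | succ n ih =>
      obtain ⟨u, huF, hcard⟩ := ih
      obtain ⟨z, hz⟩ := hF.2.2.2 u huF q hqF
      refine ⟨u ++ z ++ q, hz, ?_⟩
      set c : List A := z ++ q with hc
      have hassoc : u ++ z ++ q = u ++ c := by rw [hc, List.append_assoc]
      have hmap : insert q ((fun s => s ++ c) '' Sq u) ⊆ Sq (u ++ z ++ q) := by
        rintro s (rfl | ⟨s', hs', rfl⟩)
        · refine ⟨?_, List.prefix_refl _, hNoPreq⟩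
          exact ⟨u ++ z, rfl⟩
        · obtain ⟨h1, h2, h3⟩ := hs'
          refine ⟨?_, h2.trans ⟨c, rfl⟩, ?_⟩
          · rw [hassoc]
            obtain ⟨t, rfl⟩ := h1
            exact ⟨t, by rw [List.append_assoc]⟩
          · rintro ⟨x, hx, hxp⟩
            rcases List.prefix_or_prefix_of_prefix hxp (⟨c, rfl⟩ : s' <+: s' ++ c) with h | h
            · exact h3 ⟨x, hx, h⟩
            · exact (hcomp x hx).2 (h2.trans h)
      have hinj : Set.InjOn (fun s => s ++ c) (Sq u) := by
        intro a _ b _ h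
        exact List.append_cancel_right h
      have hqnotin : q ∉ (fun s => s ++ c) '' Sq u := by
        rintro ⟨s, hs, heq⟩
        have h1 : q.length ≤ s.length := hs.2.1.length_le
        have h2 : (s ++ c).length = q.length := congrArg List.length heq
        rw [List.length_append] at h2
        have h3 : 0 < q.length := List.length_pos_iff.2 hqne
        have h4 : q.length ≤ c.length := by simp [hc, List.length_append]
        omega
      have hfin : ((fun s => s ++ c) '' Sq u).Finite := (finite_Sq u q).image _
      calc n + 1 + 1 ≤ (Sq u).ncard + 1 := by omega
        _ = ((fun s => s ++ c) '' Sq u).ncard + 1 := by rw [Set.ncard_image_of_injOn hinj]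
        _ = (insert q ((fun s => s ++ c) '' Sq u)).ncard :=
            (Set.ncard_insert_of_notMem hqnotin hfin).symm
        _ ≤ (Sq (u ++ z ++ q)).ncard := Set.ncard_le_ncard hmap (finite_Sq _ q)
  obtain ⟨n, hb⟩ := bound_of_ne_top hd
  obtain ⟨u, huF, hcard⟩ := claim n
  have hdelta : n + 2 ≤ delta X u := by
    rw [delta_eq_S hX]
    have hsub : insert [] (Sq u) ⊆ Sset X u := by
      rintro s (rfl | hs)
      · refine ⟨List.nil_suffix, ?_⟩
        rintro ⟨x, hx, hp⟩
        exact hX.1.2.1 x hx (List.prefix_nil.1 hp)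
      · exact ⟨hs.1, hs.2.2⟩
    have hnotin : ([] : List A) ∉ Sq u := by
      rintro ⟨-, h2, -⟩
      exact hqne (List.prefix_nil.1 h2)
    calc n + 2 = n + 1 + 1 := rfl
      _ ≤ (Sq u).ncard + 1 := by omega
      _ = (insert [] (Sq u)).ncard := (Set.ncard_insert_of_notMem hnotin (finite_Sq u q)).symm
      _ ≤ (Sset X u).ncard := Set.ncard_le_ncard hsub (finite_Sset X u)
  have := hb u huF
  omega

end Stmt9Aux
namespace Stmt9Aux

variable {A : Type*} {X F : Set (List A)}

lemma maximal_of (hF : Recurrent F) (hX : IsBifixCode X) (hXF : X ⊆ F)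
    (hd : Fdeg X F ≠ ⊤) : IsFMaximalBifixCode F X := by
  refine ⟨hX, hXF, fun Y hY hYF hXY => ?_⟩
  refine Set.Subset.antisymm ?_ hXY
  intro z hz
  by_contra hzX
  have hzne : z ≠ [] := hY.1.2.1 z hz
  obtain ⟨x, hx, h | h⟩ := pc_of_ne_top hF hX hd z (hYF hz) hzne
  · exact hzX ((hY.1.2.2 x (hXY hx) z hz h) ▸ hx)
  · exact hzX ((hY.1.2.2 z hz x (hXY hx) h).symm ▸ hx)

lemma witness_ne_nil (hX : IsBifixCode X) {w₀ : List A}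
    (hwit : ∀ x ∈ X, ¬ w₀ <:+: x) : w₀ ≠ [] := by
  obtain ⟨x, hx⟩ := hX.1.1
  rintro rfl
  exact hwit x hx (List.nil_infix)

lemma thin_of (hF : Recurrent F) (hX : IsBifixCode X) (hXF : X ⊆ F)
    (hd : Fdeg X F ≠ ⊤) : FThin F X := by
  obtain ⟨x₀, hx₀⟩ := hX.1.1
  have hx₀ne : x₀ ≠ [] := hX.1.2.1 x₀ hx₀
  obtain ⟨w, hwF, hwmax⟩ := attain hX hd hF.2.1
  have hdnat : ∀ y ∈ F, delta X y ≤ delta X w := by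
    intro y hyF
    have h1 := le_Fdeg (X := X) hyF
    rw [← hwmax] at h1
    exact_mod_cast h1
  obtain ⟨z₁, hz₁⟩ := hF.2.2.2 x₀ (hXF hx₀) w hwF
  obtain ⟨z₂, hz₂⟩ := hF.2.2.2 _ hz₁ x₀ (hXF hx₀)
  refine ⟨x₀ ++ z₁ ++ w ++ z₂ ++ x₀, hz₂, ?_⟩
  set v : List A := x₀ ++ z₁ ++ w ++ z₂ ++ x₀ with hv
  have hδv : delta X v = delta X w := by
    have a1 : delta X w ≤ delta X (x₀ ++ z₁ ++ w) := delta_le_append_left hX w (x₀ ++ z₁)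
    have a2 : delta X (x₀ ++ z₁ ++ w) ≤ delta X (x₀ ++ z₁ ++ w ++ z₂) :=
      delta_le_append_right hX _ _
    have a3 : delta X (x₀ ++ z₁ ++ w ++ z₂) ≤ delta X v := delta_le_append_right hX _ _
    have a4 := hdnat v hz₂
    omega
  rintro y hy ⟨p, s, hpys⟩
  by_cases hpne : p = []
  · subst hpne
    rw [List.nil_append] at hpys
    have hvy : v <+: y := ⟨s, hpys⟩
    have hx₀v : x₀ <+: v := ⟨z₁ ++ w ++ z₂ ++ x₀, by simp [hv, List.append_assoc]⟩
    have heq : x₀ = y := hX.1.2.2 x₀ hx₀ y hy (hx₀v.trans hvy)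
    have h1 : v.length ≤ y.length := hvy.length_le
    have h2 : y.length = x₀.length := by rw [← heq]
    have h3 : x₀.length + x₀.length ≤ v.length := by
      simp [hv, List.length_append]; omega
    have h4 : 0 < x₀.length := List.length_pos_iff.2 hx₀ne
    omega
  by_cases hsne : s = []
  · subst hsne
    rw [List.append_nil] at hpys
    have hvy : v <:+ y := ⟨p, hpys⟩
    have hx₀v : x₀ <:+ v := ⟨x₀ ++ z₁ ++ w ++ z₂, rfl⟩
    have heq : x₀ = y := hX.2.2.2 x₀ hx₀ y hy (hx₀v.trans hvy)
    have h1 : v.length ≤ y.length := hvy.length_le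
    have h2 : y.length = x₀.length := by rw [← heq]
    have h3 : x₀.length + x₀.length ≤ v.length := by
      simp [hv, List.length_append]; omega
    have h4 : 0 < x₀.length := List.length_pos_iff.2 hx₀ne
    omega
  · have hlt : delta X v < delta X (p ++ v ++ s) := delta_internal_lt hX (hpys ▸ hy) hpne hsne
    rw [hpys] at hlt
    have := hdnat y (hXF hy)
    omega

lemma comp_of_max (hmax : IsFMaximalBifixCode F X) :
    ∀ q ∈ F, q ≠ [] → PC X q ∨ SC X q := by
  intro q hqF hqne
  by_contra hc
  push_neg at hc
  obtain ⟨hpc, hsc⟩ := hc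
  have hqX : q ∉ X := fun h => hsc ⟨q, h, Or.inl (List.suffix_refl q)⟩
  have hY : IsBifixCode (insert q X) := by
    constructor
    · refine ⟨⟨q, Set.mem_insert _ _⟩, ?_, ?_⟩
      · intro w hw
        rcases Set.mem_insert_iff.1 hw with rfl | hw
        exacts [hqne, hmax.1.1.2.1 w hw]
      · intro u hu v hv h
        rcases Set.mem_insert_iff.1 hu with rfl | hu'
        · rcases Set.mem_insert_iff.1 hv with rfl | hv'
          · rfl
          · exact absurd ⟨v, hv', Or.inr h⟩ hpc
        · rcases Set.mem_insert_iff.1 hv with rfl | hv'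
          · exact absurd ⟨u, hu', Or.inl h⟩ hpc
          · exact hmax.1.1.2.2 u hu' v hv' h
    · refine ⟨⟨q, Set.mem_insert _ _⟩, ?_, ?_⟩
      · intro w hw
        rcases Set.mem_insert_iff.1 hw with rfl | hw
        exacts [hqne, hmax.1.1.2.1 w hw]
      · intro u hu v hv h
        rcases Set.mem_insert_iff.1 hu with rfl | hu'
        · rcases Set.mem_insert_iff.1 hv with rfl | hv'
          · rfl
          · exact absurd ⟨v, hv', Or.inr h⟩ hsc
        · rcases Set.mem_insert_iff.1 hv with rfl | hv'
          · exact absurd ⟨u, hu', Or.inl h⟩ hsc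
          · exact hmax.1.2.2.2 u hu' v hv' h
  have heq := hmax.2.2 (insert q X) hY (Set.insert_subset hqF hmax.2.1)
    (Set.subset_insert _ _)
  exact hqX (heq ▸ Set.mem_insert q X)

end Stmt9Aux
namespace Stmt9Aux

variable {A : Type*} {X F : Set (List A)}

lemma ne_top_of_thin_max (hF : Recurrent F) (hX : IsBifixCode X)
    (hthin : FThin F X) (hmax : IsFMaximalBifixCode F X) : Fdeg X F ≠ ⊤ := by
  obtain ⟨w₀, hw₀F, hwit⟩ := hthin
  have hw₀ne : w₀ ≠ [] := witness_ne_nil hX hwit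
  apply Fdeg_ne_top_of_bound (n := w₀.length + 1)
  by_cases hA : ∀ q ∈ F, q ≠ [] → SC X q
  · -- universal suffix comparability: bound via prefixes, witness on the left
    intro v hvF
    obtain ⟨z, hz⟩ := hF.2.2.2 w₀ hw₀F v hvF
    have h1 : delta X v ≤ delta X (w₀ ++ z ++ v) := delta_le_append_left hX v (w₀ ++ z)
    have h2 : delta X (w₀ ++ z ++ v) ≤ w₀.length + 1 := by
      rw [delta_eq_P hX]
      have hw₀pre : w₀ <+: w₀ ++ z ++ v := ⟨z ++ v, by rw [List.append_assoc]⟩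
      have hsub : Pset X (w₀ ++ z ++ v) ⊆ {p | p <+: w₀} := by
        rintro p ⟨hp, hns⟩
        by_cases hpne : p = []
        · subst hpne; exact List.nil_prefix
        · have hpF : p ∈ F := hF.1 _ hz p hp.isInfix
          obtain ⟨x, hx, h | h⟩ := hA p hpF hpne
          · exact absurd ⟨x, hx, h⟩ hns
          · by_cases hlen : p.length ≤ w₀.length
            · exact List.prefix_of_prefix_length_le hp hw₀pre hlen
            · exfalso
              have hw₀p : w₀ <+: p := List.prefix_of_prefix_length_le hw₀pre hp (by omega)
              exact hwit x hx (hw₀p.isInfix.trans h.isInfix)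
      calc (Pset X _).ncard ≤ {p | p <+: w₀}.ncard :=
            Set.ncard_le_ncard hsub (finite_prefixes w₀)
        _ ≤ w₀.length + 1 := ncard_prefixes_le w₀
    omega
  · -- there is a suffix-incomparable word: universal prefix comparability
    push_neg at hA
    obtain ⟨q, hqF, hqne, hqsc⟩ := hA
    have hqinc : ∀ x ∈ X, ¬ x <:+ q ∧ ¬ q <:+ x :=
      fun x hx => ⟨fun h => hqsc ⟨x, hx, Or.inl h⟩, fun h => hqsc ⟨x, hx, Or.inr h⟩⟩
    have hUPC : ∀ p ∈ F, PC X p := by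
      intro p hpF
      obtain ⟨z, hz⟩ := hF.2.2.2 p hpF q hqF
      have hppre : p <+: p ++ z ++ q := ⟨z ++ q, by rw [List.append_assoc]⟩
      have hqsuf : q <:+ p ++ z ++ q := ⟨p ++ z, rfl⟩
      have hrne : p ++ z ++ q ≠ [] := by
        intro h
        rw [List.append_eq_nil_iff] at h
        exact hqne h.2
      rcases comp_of_max hmax _ hz hrne with hPC | hSC
      · obtain ⟨x, hx, h | h⟩ := hPC
        · rcases List.prefix_or_prefix_of_prefix h hppre with h' | h'
          · exact ⟨x, hx, Or.inl h'⟩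
          · exact ⟨x, hx, Or.inr h'⟩
        · exact ⟨x, hx, Or.inr (hppre.trans h)⟩
      · exfalso
        obtain ⟨x, hx, h | h⟩ := hSC
        · rcases List.suffix_or_suffix_of_suffix h hqsuf with h' | h'
          · exact (hqinc x hx).1 h'
          · exact (hqinc x hx).2 h'
        · exact (hqinc x hx).2 (hqsuf.trans h)
    intro v hvF
    obtain ⟨z, hz⟩ := hF.2.2.2 v hvF w₀ hw₀F
    have h1 : delta X v ≤ delta X (v ++ z ++ w₀) := by
      have := delta_le_append_right hX v (z ++ w₀)
      rwa [← List.append_assoc] at this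
    have h2 : delta X (v ++ z ++ w₀) ≤ w₀.length + 1 := by
      rw [delta_eq_S hX]
      have hw₀suf : w₀ <:+ v ++ z ++ w₀ := ⟨v ++ z, rfl⟩
      have hsub : Sset X (v ++ z ++ w₀) ⊆ {s | s <:+ w₀} := by
        rintro s ⟨hs, hnp⟩
        by_cases hsne : s = []
        · subst hsne; exact List.nil_suffix
        · have hsF : s ∈ F := hF.1 _ hz s hs.isInfix
          obtain ⟨x, hx, h | h⟩ := hUPC s hsF
          · exact absurd ⟨x, hx, h⟩ hnp
          · by_cases hlen : s.length ≤ w₀.length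
            · exact List.suffix_of_suffix_length_le hs hw₀suf hlen
            · exfalso
              have hw₀s : w₀ <:+ s := List.suffix_of_suffix_length_le hw₀suf hs (by omega)
              exact hwit x hx (hw₀s.isInfix.trans h.isInfix)
      calc (Sset X _).ncard ≤ {s | s <:+ w₀}.ncard :=
            Set.ncard_le_ncard hsub (finite_suffixes w₀)
        _ ≤ w₀.length + 1 := ncard_suffixes_le w₀
    omega

lemma part2 (hF : Recurrent F) (hX : IsBifixCode X) (hXF : X ⊆ F)
    (hd : Fdeg X F ≠ ⊤) : ∀ w ∈ F,
    ((∃ x y : List A, x ≠ [] ∧ y ≠ [] ∧ x ++ w ++ y ∈ X) ↔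
      (delta X w : ℕ∞) < Fdeg X F) := by
  intro w hwF
  constructor
  · rintro ⟨x, y, hx, hy, hmem⟩
    have h1 : delta X w < delta X (x ++ w ++ y) := delta_internal_lt hX hmem hx hy
    have h2 : (delta X (x ++ w ++ y) : ℕ∞) ≤ Fdeg X F := le_Fdeg (hXF hmem)
    exact lt_of_lt_of_le (by exact_mod_cast h1) h2
  · intro hlt
    by_contra hni
    push_neg at hni
    have hb : ∀ v ∈ F, delta X v ≤ delta X w := by
      intro v hvF
      obtain ⟨z, hz⟩ := hF.2.2.2 v hvF w hwF
      have h1 : delta X v ≤ delta X (v ++ z ++ w) := by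
        have := delta_le_append_right hX v (z ++ w)
        rwa [← List.append_assoc] at this
      have hwsuf : w <:+ v ++ z ++ w := ⟨v ++ z, rfl⟩
      have h2 : delta X (v ++ z ++ w) ≤ delta X w := by
        rw [delta_eq_S hX, delta_eq_S hX]
        apply Set.ncard_le_ncard _ (finite_Sset X w)
        rintro s ⟨hs, hnp⟩
        by_cases hlen : s.length ≤ w.length
        · exact ⟨List.suffix_of_suffix_length_le hs hwsuf hlen, hnp⟩
        · exfalso
          have hws : w <:+ s := List.suffix_of_suffix_length_le hwsuf hs (by omega)
          obtain ⟨s₁, rfl⟩ := hws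
          have hs₁ne : s₁ ≠ [] := by
            rintro rfl
            rw [List.nil_append] at hlen
            omega
          have hsne : s₁ ++ w ≠ [] := by simp [hs₁ne]
          have hsF : s₁ ++ w ∈ F := hF.1 _ hz _ hs.isInfix
          obtain ⟨x, hx, h | h⟩ := pc_of_ne_top hF hX hd _ hsF hsne
          · exact hnp ⟨x, hx, h⟩
          · obtain ⟨r, hr⟩ := h
            by_cases hrne : r = []
            · subst hrne
              rw [List.append_nil] at hr
              exact hnp ⟨x, hx, hr ▸ List.prefix_refl _⟩
            · exact hni s₁ r hs₁ne hrne (hr ▸ hx)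
      omega
    have hle : Fdeg X F ≤ (delta X w : ℕ∞) := Fdeg_le hb
    exact absurd hlt (not_lt.2 hle)

end Stmt9Aux
open PaperDefs in
theorem stmt_9 {A : Type} [Fintype A]
    (F X : Set (List A)) (hF : Recurrent F)
    (hX : IsBifixCode X) (hXF : X ⊆ F) :
    (Fdeg X F ≠ ⊤ ↔ (FThin F X ∧ IsFMaximalBifixCode F X)) ∧
    (Fdeg X F ≠ ⊤ → ∀ w ∈ F,
      ((∃ x y : List A, x ≠ [] ∧ y ≠ [] ∧ x ++ w ++ y ∈ X) ↔
        (delta X w : ℕ∞) < Fdeg X F)) := by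
  constructor
  · constructor
    · intro hd
      exact ⟨Stmt9Aux.thin_of hF hX hXF hd, Stmt9Aux.maximal_of hF hX hXF hd⟩
    · rintro ⟨hthin, hmax⟩
      exact Stmt9Aux.ne_top_of_thin_max hF hX hthin hmax
  · intro hd
    exact Stmt9Aux.part2 hF hX hXF hd
end

section
/- Let A be a finite alphabet, let Z be a maximal bifix code of A* with finite degree d(Z), and let F ⊆ A* be a recurrent set. Then the intersection X = Z ∩ F is an F-maximal bifix code; one has d_F(X) ≤ d(Z), with equality if Z is finite; and if F is moreover uniformly recurrent, then X is a finite set. -/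
/-! For a prefix code `X`, a parse of `w` is determined by its first component, so `δ_X(w)` is
the number of prefixes of `w` without a suffix in `X`. Thus `δ_X` grows under extension on the
right, strictly when the nonempty extension leaves no suffix in `X`; reversing words turns suffix
codes into prefix codes, so for a suffix code `δ_X` grows under extension on the left. On a
factorial `F`, `δ_{Z ∩ F}` and `δ_Z` agree, which gives `d_F(Z ∩ F) ≤ d(Z)`. Each other claim
is proved by producing words of unbounded `δ_Z` if it failed, against `d(Z) < ∞`; for finite
`Z` this shows that `δ_Z` is maximal on every word longer than all code words, and such words
occur in `F`. -/

namespace PaperDefs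

variable {A : Type*} {X : Set (List A)}

def parsePrefixes (X : Set (List A)) (w : List A) : Set (List A) :=
  {v | v <+: w ∧ ¬ ∃ s ∈ X, s <:+ v}

theorem IsPrefixCode.mono {Y : Set (List A)} (hX : IsPrefixCode X) (hYX : Y ⊆ X)
    (hY : Y.Nonempty) : IsPrefixCode Y :=
  ⟨hY, fun w hw => hX.2.1 w (hYX hw), fun u hu v hv => hX.2.2 u (hYX hu) v (hYX hv)⟩

theorem IsSuffixCode.mono {Y : Set (List A)} (hX : IsSuffixCode X) (hYX : Y ⊆ X)
    (hY : Y.Nonempty) : IsSuffixCode Y :=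
  ⟨hY, fun w hw => hX.2.1 w (hYX hw), fun u hu v hv => hX.2.2 u (hYX hu) v (hYX hv)⟩

theorem IsBifixCode.mono {Y : Set (List A)} (hX : IsBifixCode X) (hYX : Y ⊆ X)
    (hY : Y.Nonempty) : IsBifixCode Y :=
  ⟨hX.1.mono hYX hY, hX.2.mono hYX hY⟩

theorem IsSuffixCode.image_reverse (hX : IsSuffixCode X) :
    IsPrefixCode (List.reverse '' X) := by
  refine ⟨hX.1.image _, ?_, ?_⟩
  · rintro _ ⟨w, hw, rfl⟩
    simpa using hX.2.1 w hw
  · rintro _ ⟨u, hu, rfl⟩ _ ⟨v, hv, rfl⟩ h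
    rw [hX.2.2 u hu v hv (List.reverse_prefix.mp h)]

theorem exists_flatten_append_eq (hX : ∀ z ∈ X, z ≠ []) (r : List A) :
    ∃ (l : List (List A)) (u : List A),
      (∀ z ∈ l, z ∈ X) ∧ (¬ ∃ s ∈ X, s <+: u) ∧ l.flatten ++ u = r := by
  by_cases h : ∃ z ∈ X, z <+: r
  · obtain ⟨z, hz, t, rfl⟩ := h
    have : t.length < (z ++ t).length := by
      simpa using List.length_pos_iff.mpr (hX z hz)
    obtain ⟨l, u, hl, hu, rfl⟩ := exists_flatten_append_eq hX t
    refine ⟨z :: l, u, ?_, hu, by simp⟩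
    simpa [hz] using hl
  · exact ⟨[], r, by simp, h, rfl⟩
termination_by r.length

theorem IsPrefixCode.eq_of_flatten_append_eq (hX : IsPrefixCode X)
    {l l' : List (List A)} {u u' : List A} (hl : ∀ z ∈ l, z ∈ X) (hl' : ∀ z ∈ l', z ∈ X)
    (hu : ¬ ∃ s ∈ X, s <+: u) (hu' : ¬ ∃ s ∈ X, s <+: u')
    (h : l.flatten ++ u = l'.flatten ++ u') : u = u' := by
  induction l generalizing l' with
  | nil =>
    cases l' with
    | nil => simpa using h
    | cons z t =>
      simp only [List.flatten_nil, List.nil_append, List.flatten_cons] at h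
      exact absurd ⟨z, hl' z (by simp), ⟨t.flatten ++ u', by simp [h]⟩⟩ hu
  | cons z t ih =>
    cases l' with
    | nil =>
      simp only [List.flatten_nil, List.nil_append, List.flatten_cons] at h
      exact absurd ⟨z, hl z (by simp), ⟨t.flatten ++ u, by simp [← h]⟩⟩ hu'
    | cons z' t' =>
      simp only [List.flatten_cons, List.append_assoc] at h
      have hz : z = z' := by
        rcases List.prefix_or_prefix_of_prefix ⟨_, h⟩ ⟨_, rfl⟩ with h' | h'
        · exact hX.2.2 z (hl z (by simp)) z' (hl' z' (by simp)) h'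
        · exact (hX.2.2 z' (hl' z' (by simp)) z (hl z (by simp)) h').symm
      subst hz
      exact ih (fun x hx => hl x (by simp [hx])) (fun x hx => hl' x (by simp [hx]))
        (List.append_cancel_left h)

theorem IsPrefixCode.delta_eq_ncard (hX : IsPrefixCode X) (w : List A) :
    delta X w = (parsePrefixes X w).ncard := by
  have himage : Prod.fst '' {p | IsParse X w p} = parsePrefixes X w := by
    apply Set.Subset.antisymm
    · rintro _ ⟨p, hp, rfl⟩
      exact ⟨⟨_, by rw [← List.append_assoc, hp.1]⟩, hp.2.1⟩
    · rintro v ⟨⟨r, rfl⟩, hv⟩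
      obtain ⟨l, u, hl, hu, rfl⟩ := exists_flatten_append_eq hX.2.1 r
      exact ⟨(v, l.flatten, u), ⟨by simp, hv, ⟨l, hl, rfl⟩, hu⟩, rfl⟩
  have hinj : Set.InjOn Prod.fst {p | IsParse X w p} := by
    rintro ⟨v, x, u⟩ ⟨hw, -, ⟨l, hl, rfl⟩, hu⟩ ⟨v', x', u'⟩ ⟨hw', -, ⟨l', hl', rfl⟩, hu'⟩ hv
    obtain rfl : v = v' := hv
    have heq := hw.trans hw'.symm
    simp only [List.append_assoc, List.append_cancel_left_eq] at heq
    obtain rfl : u = u' := hX.eq_of_flatten_append_eq hl hl' hu hu' heq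
    simpa using heq
  rw [delta, ← himage, hinj.ncard_image]

theorem parsePrefixes_finite (X : Set (List A)) (w : List A) : (parsePrefixes X w).Finite :=
  (w.inits.finite_toSet).subset fun v hv => (List.mem_inits v w).mpr hv.1

theorem parsePrefixes_mono (X : Set (List A)) (w t : List A) :
    parsePrefixes X w ⊆ parsePrefixes X (w ++ t) :=
  fun _ hv => ⟨hv.1.trans (List.prefix_append w t), hv.2⟩

theorem IsPrefixCode.delta_le_delta_append (hX : IsPrefixCode X) (w t : List A) :
    delta X w ≤ delta X (w ++ t) := by
  rw [hX.delta_eq_ncard, hX.delta_eq_ncard]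
  exact Set.ncard_le_ncard (parsePrefixes_mono X w t) (parsePrefixes_finite X _)

theorem IsPrefixCode.delta_lt_delta_append (hX : IsPrefixCode X) {w t : List A} (ht : t ≠ [])
    (hwt : ¬ ∃ s ∈ X, s <:+ w ++ t) : delta X w < delta X (w ++ t) := by
  rw [hX.delta_eq_ncard, hX.delta_eq_ncard]
  refine Set.ncard_lt_ncard ⟨parsePrefixes_mono X w t, fun h => ht ?_⟩ (parsePrefixes_finite X _)
  simpa using (h ⟨List.prefix_rfl, hwt⟩).1.length_le

theorem IsPrefixCode.succ_le_delta_of_injOn (hX : IsPrefixCode X) {w : List A} {k : ℕ}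
    {f : ℕ → List A} (hf : ∀ i ≤ k, f i ∈ parsePrefixes X w) (hinj : Set.InjOn f (Set.Iic k)) :
    k + 1 ≤ delta X w := by
  rw [hX.delta_eq_ncard, ← Nat.card_Iic k, ← Set.ncard_coe_finset, Finset.coe_Iic,
    ← hinj.ncard_image]
  exact Set.ncard_le_ncard (by rintro _ ⟨i, hi, rfl⟩; exact hf i hi) (parsePrefixes_finite X w)

theorem delta_image_reverse (X : Set (List A)) (w : List A) :
    delta (List.reverse '' X) w.reverse = delta X w := by
  let rev : List A × List A × List A → List A × List A × List A :=
    fun p => (p.2.2.reverse, p.2.1.reverse, p.1.reverse)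
  have hrev : Function.Injective rev := by
    rintro ⟨v, x, u⟩ ⟨v', x', u'⟩ h
    simpa [rev, and_comm, and_assoc] using h
  have hparse : ∀ (X : Set (List A)) w p, IsParse X w p →
      IsParse (List.reverse '' X) w.reverse (rev p) := by
    rintro X w ⟨v, x, u⟩ ⟨rfl, hv, ⟨l, hl, rfl⟩, hu⟩
    refine ⟨by simp [rev], ?_, ⟨(l.map List.reverse).reverse, ?_, ?_⟩, ?_⟩
    · rintro ⟨_, ⟨s, hs, rfl⟩, h⟩
      exact hu ⟨s, hs, List.reverse_suffix.mp h⟩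
    · simpa using fun z hz => ⟨z.reverse, hl _ hz, by simp⟩
    · simp [rev, List.reverse_flatten]
    · rintro ⟨_, ⟨s, hs, rfl⟩, h⟩
      exact hv ⟨s, hs, List.reverse_prefix.mp h⟩
  have himage : {p | IsParse (List.reverse '' X) w.reverse p} = rev '' {p | IsParse X w p} := by
    refine Set.Subset.antisymm (fun p hp => ⟨rev p, ?_, by simp [rev]⟩)
      (Set.image_subset_iff.mpr fun p => hparse X w p)
    simpa [Set.image_image] using hparse _ _ p hp
  rw [delta, delta, himage, Set.ncard_image_of_injective _ hrev]

theorem IsSuffixCode.delta_le_delta_append (hX : IsSuffixCode X) (w t : List A) :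
    delta X w ≤ delta X (t ++ w) := by
  rw [← delta_image_reverse X w, ← delta_image_reverse X (t ++ w), List.reverse_append]
  exact hX.image_reverse.delta_le_delta_append _ _

theorem delta_le_deg (X : Set (List A)) (w : List A) : (delta X w : ℕ∞) ≤ deg X :=
  le_iSup₂ (f := fun w (_ : w ∈ Set.univ) => (delta X w : ℕ∞)) w trivial

theorem exists_delta_le (hd : deg X ≠ ⊤) : ∃ d, ∀ w, delta X w ≤ d := by
  refine ⟨(deg X).toNat, fun w => ?_⟩
  have := delta_le_deg X w
  rw [← ENat.natCast_toNat hd] at this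
  exact_mod_cast this

theorem Recurrent.exists_length_le {F : Set (List A)} (hF : Recurrent F) (n : ℕ) :
    ∃ w ∈ F, n ≤ w.length := by
  obtain ⟨u, huF, hu⟩ : ∃ u ∈ F, u ≠ [] := by
    by_contra! h
    exact hF.2.2.1 ((hF.2.1.subset_singleton_iff).mp h)
  induction n with
  | zero => exact ⟨u, huF, Nat.zero_le _⟩
  | succ n ih =>
    obtain ⟨w, hwF, hw⟩ := ih
    obtain ⟨t, ht⟩ := hF.2.2.2 w hwF u huF
    refine ⟨w ++ t ++ u, ht, ?_⟩
    simp only [List.length_append]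
    have := List.length_pos_iff.mpr hu
    omega

/-- Otherwise the powers of `y` would have unboundedly many parses. -/
theorem IsPrefixCode.exists_mem_suffix (hX : IsPrefixCode X) (hd : deg X ≠ ⊤) {y : List A}
    (hy : ∀ z ∈ X, z.length ≤ y.length) : ∃ z ∈ X, z <:+ y := by
  by_contra hno
  obtain ⟨d, hd⟩ := exists_delta_le hd
  have hpow : ∀ i, ¬ ∃ s ∈ X, s <:+ (List.replicate i y).flatten := by
    rintro (_ | i) ⟨s, hs, hsuf⟩
    · exact hX.2.1 s hs (List.suffix_nil.mp (by simpa using hsuf))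
    · rw [List.replicate_succ', List.flatten_append, List.flatten_singleton] at hsuf
      exact hno ⟨s, hs, List.suffix_of_suffix_length_le hsuf (List.suffix_append _ _) (hy s hs)⟩
  have hy0 : 0 < y.length := by
    obtain ⟨z, hz⟩ := hX.1
    exact (List.length_pos_iff.mpr (hX.2.1 z hz)).trans_le (hy z hz)
  have hmem : ∀ i ≤ d, (List.replicate i y).flatten ∈
      parsePrefixes X (List.replicate d y).flatten := by
    refine fun i hi => ⟨⟨(List.replicate (d - i) y).flatten, ?_⟩, hpow i⟩
    rw [← List.flatten_append, ← List.replicate_add, Nat.add_sub_cancel' hi]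
  have hinj : Set.InjOn (fun i => (List.replicate i y).flatten) (Set.Iic d) := by
    intro i _ j _ h
    have := congrArg List.length h
    simp only [List.length_flatten, List.map_replicate, List.sum_replicate, smul_eq_mul] at this
    exact Nat.eq_of_mul_eq_mul_right hy0 this
  linarith [hX.succ_le_delta_of_injOn hmem hinj, hd (List.replicate d y).flatten]

theorem IsPrefixCode.delta_append_eq (hX : IsPrefixCode X) (hd : deg X ≠ ⊤) {w : List A}
    (hw : ∀ z ∈ X, z.length ≤ w.length) (v : List A) : delta X (w ++ v) = delta X w := by
  rw [hX.delta_eq_ncard, hX.delta_eq_ncard]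
  congr 1
  refine Set.Subset.antisymm (fun t ht => ⟨?_, ht.2⟩) (parsePrefixes_mono X w v)
  refine List.prefix_of_prefix_length_le ht.1 (List.prefix_append w v) ?_
  by_contra! hlt
  exact ht.2 (hX.exists_mem_suffix hd fun z hz => (hw z hz).trans hlt.le)

theorem IsBifixCode.deg_eq_delta (hX : IsBifixCode X) (hd : deg X ≠ ⊤) {w : List A}
    (hw : ∀ z ∈ X, z.length ≤ w.length) : deg X = delta X w := by
  refine le_antisymm (iSup₂_le fun u _ => ?_) (delta_le_deg X w)
  exact_mod_cast (hX.2.delta_le_delta_append u w).trans_eq (hX.1.delta_append_eq hd hw u)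

/-- `x ++ s` has no suffix in `X`, since such a suffix would be a proper suffix of the code
word `p ++ x ++ s`; this makes `δ` grow strictly from `x` to `x ++ s`. -/
theorem IsBifixCode.delta_lt_of_mem (hX : IsBifixCode X) {p x s : List A}
    (hz : p ++ x ++ s ∈ X) (hp : p ≠ []) (hs : s ≠ []) : delta X x < delta X (p ++ x ++ s) := by
  have hxs : ¬ ∃ t ∈ X, t <:+ x ++ s := by
    rintro ⟨t, ht, hsuf⟩
    have hlen := congrArg List.length
      (hX.2.2.2 t ht _ hz (hsuf.trans ⟨p, (List.append_assoc _ _ _).symm⟩))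
    have hle := hsuf.length_le
    have hp := List.length_pos_iff.mpr hp
    simp only [List.length_append] at hlen hle
    omega
  calc delta X x < delta X (x ++ s) := hX.1.delta_lt_delta_append hs hxs
    _ ≤ delta X (p ++ (x ++ s)) := hX.2.delta_le_delta_append _ _
    _ = delta X (p ++ x ++ s) := by rw [List.append_assoc]

theorem parsePrefixes_inter {F : Set (List A)} (hF : Factorial F) {w : List A} (hw : w ∈ F) :
    parsePrefixes (X ∩ F) w = parsePrefixes X w := by
  ext v
  refine and_congr_right fun hv => not_congr ⟨fun ⟨s, hs, h⟩ => ⟨s, hs.1, h⟩, ?_⟩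
  exact fun ⟨s, hs, h⟩ => ⟨s, ⟨hs, hF w hw s (h.isInfix.trans hv.isInfix)⟩, h⟩

theorem IsPrefixCode.delta_inter (hX : IsPrefixCode X) {F : Set (List A)}
    (hne : (X ∩ F).Nonempty) (hF : Factorial F) {w : List A} (hw : w ∈ F) :
    delta (X ∩ F) w = delta X w := by
  rw [(hX.mono Set.inter_subset_left hne).delta_eq_ncard, hX.delta_eq_ncard,
    parsePrefixes_inter hF hw]

/-- If `X ∩ F` were empty, no prefix of a word `w ∈ F` would have a suffix in `X`, so `w`
would have `|w| + 1` parses. -/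
theorem IsPrefixCode.inter_nonempty (hX : IsPrefixCode X) (hd : deg X ≠ ⊤)
    {F : Set (List A)} (hF : Recurrent F) : (X ∩ F).Nonempty := by
  by_contra hempty
  obtain ⟨d, hd⟩ := exists_delta_le hd
  obtain ⟨w, hwF, hw⟩ := hF.exists_length_le d
  have hmem : ∀ i ≤ w.length, w.take i ∈ parsePrefixes X w := fun i _ =>
    ⟨List.take_prefix i w, fun ⟨s, hs, h⟩ =>
      hempty ⟨s, hs, hF.1 w hwF s (h.isInfix.trans (List.take_prefix i w).isInfix)⟩⟩
  have hinj : Set.InjOn w.take (Set.Iic w.length) := by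
    intro i hi j hj h
    have := congrArg List.length h
    simp only [List.length_take, Set.mem_Iic] at this hi hj
    omega
  linarith [hX.succ_le_delta_of_injOn hmem hinj, hd w]

/-- A word `y ∈ Y ∖ X` gives words `w t y ∈ F` without suffix in `X` (such a suffix would lie
in `X ∩ F ⊆ Y` and be comparable with `y`), along which `δ_X` grows without bound. -/
theorem IsPrefixCode.subset_of_inter_subset (hX : IsPrefixCode X) (hd : deg X ≠ ⊤)
    {F Y : Set (List A)} (hF : Recurrent F) (hY : IsSuffixCode Y) (hYF : Y ⊆ F)
    (hXY : X ∩ F ⊆ Y) : Y ⊆ X := by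
  intro y hy
  by_contra hyX
  have hsuf : ∀ v, v ++ y ∈ F → ¬ ∃ s ∈ X, s <:+ v ++ y := by
    rintro v hv ⟨s, hs, hsv⟩
    have hsY : s ∈ Y := hXY ⟨hs, hF.1 _ hv s hsv.isInfix⟩
    rcases List.suffix_or_suffix_of_suffix hsv (List.suffix_append v y) with h | h
    · exact hyX (hY.2.2 s hsY y hy h ▸ hs)
    · exact hyX (hY.2.2 y hy s hsY h ▸ hs)
  have hgrow : ∀ k, ∃ w ∈ F, k ≤ delta X w := by
    intro k
    induction k with
    | zero => exact ⟨y, hYF hy, Nat.zero_le _⟩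
    | succ k ih =>
      obtain ⟨w, hw, hk⟩ := ih
      obtain ⟨t, ht⟩ := hF.2.2.2 w hw y (hYF hy)
      have := hX.delta_le_delta_append w t
      have := hX.delta_lt_delta_append (hY.2.1 y hy) (hsuf _ ht)
      exact ⟨w ++ t ++ y, ht, by omega⟩
  obtain ⟨d, hd⟩ := exists_delta_le hd
  obtain ⟨w, -, hw⟩ := hgrow (d + 1)
  linarith [hd w]

theorem UniformlyRecurrent.exists_forall_internal {F : Set (List A)}
    (hF : UniformlyRecurrent F) {x : List A} (hx : x ∈ F) :
    ∃ n, ∀ w ∈ F, n ≤ w.length → ∃ p s, p ≠ [] ∧ s ≠ [] ∧ w = p ++ x ++ s := by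
  obtain ⟨n, hn⟩ := hF.2 x hx
  refine ⟨n + 2, fun w hw hlen => ?_⟩
  obtain ⟨a, t, rfl⟩ := List.exists_cons_of_ne_nil (l := w) (by rintro rfl; simp at hlen)
  obtain rfl | ⟨m, b, rfl⟩ := t.eq_nil_or_concat'
  · simp at hlen
  obtain ⟨p, s, rfl⟩ := hn m (hF.1.1 _ hw m ⟨[a], [b], rfl⟩) (by simp at hlen; omega)
  exact ⟨a :: p, s ++ [b], by simp, by simp, by simp⟩

/-- In a uniformly recurrent `F`, every code word of `X ∩ F` is an internal factor of all
longer ones, so infinitely many of them would give unboundedly many parses. -/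
theorem IsBifixCode.inter_finite [Finite A] (hX : IsBifixCode X) (hd : deg X ≠ ⊤)
    {F : Set (List A)} (hF : UniformlyRecurrent F) : (X ∩ F).Finite := by
  by_contra hinf
  have hgrow : ∀ k, ∃ z ∈ X ∩ F, k ≤ delta X z := by
    intro k
    induction k with
    | zero =>
      obtain ⟨z, hz⟩ := Set.Infinite.nonempty hinf
      exact ⟨z, hz, Nat.zero_le _⟩
    | succ k ih =>
      obtain ⟨z, hz, hk⟩ := ih
      obtain ⟨n, hn⟩ := hF.exists_forall_internal hz.2
      obtain ⟨z', hz', hlen⟩ := (Set.Infinite.sdiff hinf (List.finite_length_le A n)).nonempty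
      obtain ⟨p, s, hp, hs, rfl⟩ := hn z' hz'.2 (by simp at hlen; omega)
      exact ⟨_, hz', by have := hX.delta_lt_of_mem hz'.1 hp hs; omega⟩
  obtain ⟨d, hd⟩ := exists_delta_le hd
  obtain ⟨z, -, hz⟩ := hgrow (d + 1)
  linarith [hd z]

end PaperDefs

open PaperDefs in
theorem stmt_10 {A : Type} [Fintype A]
    (Z F : Set (List A))
    (hZ : IsFMaximalBifixCode Set.univ Z) (hd : deg Z ≠ ⊤)
    (hF : Recurrent F) :
    IsFMaximalBifixCode F (Z ∩ F) ∧
    Fdeg (Z ∩ F) F ≤ deg Z ∧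
    (Z.Finite → Fdeg (Z ∩ F) F = deg Z) ∧
    (UniformlyRecurrent F → (Z ∩ F).Finite) := by
  obtain ⟨hZ, -, -⟩ := hZ
  have hne := hZ.1.inter_nonempty hd hF
  have hdelta : ∀ w ∈ F, delta (Z ∩ F) w = delta Z w := fun w hw =>
    hZ.1.delta_inter hne hF.1 hw
  have hle : Fdeg (Z ∩ F) F ≤ deg Z :=
    iSup₂_le fun w hw => hdelta w hw ▸ delta_le_deg Z w
  refine ⟨⟨hZ.mono Set.inter_subset_left hne, Set.inter_subset_right, fun Y hY hYF hZY => ?_⟩,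
    hle, fun hfin => ?_, fun hUR => hZ.inter_finite hd hUR⟩
  · exact (Set.subset_inter (hZ.1.subset_of_inter_subset hd hF hY.2 hYF hZY) hYF).antisymm hZY
  · obtain ⟨m, hm⟩ := (hfin.image List.length).bddAbove
    obtain ⟨w, hw, hwm⟩ := hF.exists_length_le m
    refine hle.antisymm ?_
    rw [hZ.deg_eq_delta hd fun z hz => (hm ⟨z, hz, rfl⟩).trans hwm, ← hdelta w hw]
    exact le_iSup₂ (f := fun w (_ : w ∈ F) => (delta (Z ∩ F) w : ℕ∞)) w hw
end

section
/- Let A be a finite alphabet and let F be a uniformly recurrent connected subset of A* with alphabet A. Then for every u ∈ F, the image of the set of first return words R_F(u) under the canonical monoid homomorphism from A* to the free group F(A) on A generates F(A) as a group. -/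
/-!
Consider the Rauzy graph of order `n` of `F` (vertices the words of length `n`, edges the words of
length `n + 1`), each edge labelled in `F(A)` by its last letter, and walks that may use edges
backwards. Since `F` is connected, the labels of closed walks at any vertex exhaust `F(A)`: at
order `0` the loops are the letters, and walks of order `n` lift to order `n + 1` because the
extension graphs `G(p)` are connected. Once `n` is so large that every word of length `n` contains
`u` (uniform recurrence), reading an occurrence of `u` at each vertex of a closed walk at a vertex
ending with `u` writes its label as a product of return words, because every word `r` with
`u r ∈ F ∩ A*u` is one.
-/

namespace PaperDefs

variable {A : Type}

def toFreeGroup (w : List A) : FreeGroup A := (w.map FreeGroup.of).prod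

@[simp]
theorem toFreeGroup_nil : toFreeGroup ([] : List A) = 1 := rfl

@[simp]
theorem toFreeGroup_append (v w : List A) :
    toFreeGroup (v ++ w) = toFreeGroup v * toFreeGroup w := by
  simp [toFreeGroup]

@[simp]
theorem toFreeGroup_singleton (a : A) : toFreeGroup [a] = FreeGroup.of a := by
  simp [toFreeGroup]

def returnSubgroup (F : Set (List A)) (u : List A) : Subgroup (FreeGroup A) :=
  Subgroup.closure (toFreeGroup '' ReturnWords F u)

section ReturnSubgroup

variable {F : Set (List A)} {u : List A}

/-- Cutting `u r` at an internal occurrence of `u` splits `r` into two shorter words of the same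
kind. -/
theorem toFreeGroup_mem_returnSubgroup (hF : Factorial F) {r : List A} (hr : u ++ r ∈ F)
    (hur : u <:+ u ++ r) : toFreeGroup r ∈ returnSubgroup F u := by
  by_cases hr₀ : r = []
  · simp [hr₀, one_mem]
  by_cases hint : ∃ x z : List A, x ≠ [] ∧ z ≠ [] ∧ u ++ r = x ++ u ++ z
  · obtain ⟨x, z, hx, hz, hxuz⟩ := hint
    have hlen := congrArg List.length hxuz
    simp only [List.length_append] at hlen
    have hx₀ := List.length_pos_iff.2 hx
    have hz₀ := List.length_pos_iff.2 hz
    have hzr : z <:+ r :=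
      List.suffix_of_suffix_length_le (hxuz ▸ List.suffix_append _ z) (List.suffix_append u r)
        (by omega)
    obtain ⟨r₁, rfl⟩ := hzr
    have hr₁ : u ++ r₁ = x ++ u := List.append_cancel_right (by simpa using hxuz)
    have huz : u ++ z <:+ u ++ (r₁ ++ z) := by
      rw [← List.append_assoc, hr₁, List.append_assoc]; exact List.suffix_append x _
    rw [toFreeGroup_append]
    refine mul_mem (toFreeGroup_mem_returnSubgroup hF ?_ ?_)
      (toFreeGroup_mem_returnSubgroup hF (hF _ hr _ huz.isInfix)
        (List.suffix_of_suffix_length_le hur huz (by simp)))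
    · exact hF _ hr _ (by rw [← List.append_assoc]; exact (List.prefix_append _ z).isInfix)
    · rw [hr₁]; exact List.suffix_append x u
  · exact Subgroup.subset_closure ⟨r, ⟨hr₀, hr, hur, hint⟩, rfl⟩
termination_by r.length
decreasing_by all_goals subst_vars; simp only [List.length_append] at hlen ⊢; omega

/-- If `y'` is the shorter one, then `y = r y'` where `u r` is a factor of `m` ending with `u`. -/
theorem toFreeGroup_mul_inv_mem_returnSubgroup (hF : Factorial F) {m y y' : List A} (hm : m ∈ F)
    (hy : u ++ y <:+ m) (hy' : u ++ y' <:+ m) :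
    toFreeGroup y * (toFreeGroup y')⁻¹ ∈ returnSubgroup F u := by
  wlog hle : y'.length ≤ y.length generalizing y y'
  · simpa using inv_mem (this hy' hy (by omega))
  have huy : u ++ y' <:+ u ++ y := List.suffix_of_suffix_length_le hy' hy (by simpa using hle)
  obtain ⟨r, rfl⟩ : y' <:+ y :=
    List.suffix_of_suffix_length_le ((List.suffix_append u y').trans huy) (List.suffix_append u y)
      hle
  rw [toFreeGroup_append, mul_inv_cancel_right]
  refine toFreeGroup_mem_returnSubgroup hF (hF _ hm _ ?_) ?_
  · exact ((List.prefix_append _ y').isInfix).trans (by simpa using hy.isInfix)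
  · exact List.suffix_append_self_iff.1 (by simpa using huy)

end ReturnSubgroup

section Recurrent

variable {F : Set (List A)}

theorem Recurrent.exists_ne_nil (hR : Recurrent F) : ∃ v ∈ F, v ≠ [] := by
  by_contra! h
  exact hR.2.2.1 (hR.2.1.subset_singleton_iff.1 h)

theorem Recurrent.exists_cons (hR : Recurrent F) {w : List A} (hw : w ∈ F) (hne : w ≠ []) :
    ∃ a, a :: w ∈ F := by
  obtain ⟨z, hz⟩ := hR.2.2.2 w hw w hw
  rcases List.eq_nil_or_concat (w ++ z) with h | ⟨s, a, h⟩
  · exact absurd (List.append_eq_nil_iff.1 h).1 hne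
  · exact ⟨a, hR.1 _ hz _ ⟨s, [], by simp [h]⟩⟩

theorem Recurrent.exists_suffix_le_length (hR : Recurrent F) {u : List A} (hu : u ∈ F) (n : ℕ) :
    ∃ x ∈ F, u <:+ x ∧ n ≤ x.length := by
  induction n with
  | zero => exact ⟨u, hu, List.suffix_refl u, Nat.zero_le _⟩
  | succ n ih =>
    obtain ⟨x, hx, hux, hn⟩ := ih
    obtain ⟨v, hv, hv₀⟩ := hR.exists_ne_nil
    obtain ⟨w, hw⟩ := hR.2.2.2 v hv x hx
    refine ⟨v ++ w ++ x, hw, hux.trans (List.suffix_append _ x), ?_⟩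
    have := List.length_pos_iff.2 hv₀
    simp only [List.length_append]
    omega

end Recurrent

/-- Walks in the Rauzy graph of order `n` of `F`, edges being allowed backwards: the vertices are
the words of `F` of length `n`, a word `p ++ [b] ∈ F` is an edge from `p` to `(p ++ [b]).tail`
labelled `b`, and `g` is the product of the labels met, inverted on backward edges. -/
inductive RauzyWalk (F : Set (List A)) (n : ℕ) : List A → List A → FreeGroup A → Prop
  | refl {x : List A} : x ∈ F → x.length = n → RauzyWalk F n x x 1
  | fwd {x p : List A} {g : FreeGroup A} (b : A) :
      RauzyWalk F n x p g → p ++ [b] ∈ F → RauzyWalk F n x (p ++ [b]).tail (g * .of b)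
  | bwd {x q : List A} {g : FreeGroup A} (b : A) :
      RauzyWalk F n x (q ++ [b]).tail g → q ++ [b] ∈ F → RauzyWalk F n x q (g * (.of b)⁻¹)

namespace RauzyWalk

variable {F : Set (List A)} {n : ℕ} {x y z : List A} {g h : FreeGroup A}

theorem target_mem (hF : Factorial F) (hw : RauzyWalk F n x y g) : y ∈ F ∧ y.length = n := by
  induction hw with
  | refl hx hl => exact ⟨hx, hl⟩
  | fwd b _ hpb ih => exact ⟨hF _ hpb _ (List.tail_suffix _).isInfix, by simp [ih.2]⟩
  | bwd b _ hqb ih => exact ⟨hF _ hqb _ (List.prefix_append _ _).isInfix, by simpa using ih.2⟩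

theorem trans (h₁ : RauzyWalk F n x y g) (h₂ : RauzyWalk F n y z h) :
    RauzyWalk F n x z (g * h) := by
  induction h₂ with
  | refl => rwa [mul_one]
  | fwd b _ hpb ih => rw [← mul_assoc]; exact ih.fwd b hpb
  | bwd b _ hqb ih => rw [← mul_assoc]; exact ih.bwd b hqb

theorem edge (hF : Factorial F) {p : List A} {b : A} (hpb : p ++ [b] ∈ F) (hp : p.length = n) :
    RauzyWalk F n p (p ++ [b]).tail (.of b) := by
  simpa using (refl (hF _ hpb _ (List.prefix_append _ _).isInfix) hp).fwd b hpb

theorem edge_rev (hF : Factorial F) {p : List A} {b : A} (hpb : p ++ [b] ∈ F)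
    (hp : p.length = n) : RauzyWalk F n (p ++ [b]).tail p (.of b)⁻¹ := by
  simpa using (refl (hF _ hpb _ (List.tail_suffix _).isInfix) (by simp [hp])).bwd b hpb

end RauzyWalk

def extWord (p : List A) : A ⊕ A → List A := Sum.elim (· :: p) (p ++ [·])

def extLabel : A ⊕ A → FreeGroup A := Sum.elim (fun _ => 1) FreeGroup.of

section ExtensionGraph

variable {F : Set (List A)} {n : ℕ} {p : List A}

/-- An edge `(a, b)` of `G(p)` is the Rauzy edge `a p b` of order `|p| + 1`, from `a p` to `p b`
and labelled `b`. -/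
theorem rauzyWalk_of_extGraph_adj (hF : Factorial F) (hp : p.length = n)
    {z z' : {x // ExtVertex F p x}} (hadj : (extGraph F p).Adj z z') :
    RauzyWalk F (n + 1) (extWord p z) (extWord p z') ((extLabel z.1)⁻¹ * extLabel z'.1) := by
  rw [extGraph, SimpleGraph.fromRel_adj] at hadj
  obtain ⟨-, hrel⟩ := hadj
  rcases z with ⟨a | b, hz⟩ <;> rcases z' with ⟨a' | b', hz'⟩ <;>
    simp only [ExtRel, or_false, false_or] at hrel
  · simpa [extWord, extLabel] using RauzyWalk.edge hF (p := a :: p) hrel (by simp [hp])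
  · simpa [extWord, extLabel] using RauzyWalk.edge_rev hF (p := a' :: p) hrel (by simp [hp])

theorem rauzyWalk_of_extGraph_reachable (hF : Factorial F) (hp : p.length = n)
    {z z' : {x // ExtVertex F p x}} (h : (extGraph F p).Reachable z z') :
    RauzyWalk F (n + 1) (extWord p z) (extWord p z') ((extLabel z.1)⁻¹ * extLabel z'.1) := by
  obtain ⟨W⟩ := h
  induction W with
  | @nil z =>
    rw [inv_mul_cancel]
    rcases z with ⟨a | b, hz⟩ <;> exact .refl hz (by simp [extWord, hp])
  | cons hadj _ ih =>
    simpa [mul_assoc] using (rauzyWalk_of_extGraph_adj hF hp hadj).trans ih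

theorem rauzyWalk_cons_cons (hConn : ConnectedSet F) (hF : Factorial F) (hp : p ∈ F)
    (hl : p.length = n) {a c : A} (ha : a :: p ∈ F) (hc : c :: p ∈ F) :
    RauzyWalk F (n + 1) (a :: p) (c :: p) 1 := by
  simpa [extWord, extLabel] using rauzyWalk_of_extGraph_reachable hF hl
    ((hConn p hp).preconnected ⟨.inl a, ha⟩ ⟨.inl c, hc⟩)

end ExtensionGraph

section Lifting

variable {F : Set (List A)} {n : ℕ}

/-- A walk of order `n` lifts to order `n + 1` from any left extension of its origin: each edge
`p b` is reached from the current vertex `c p` by first moving, with label `1`, to a vertex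
`d p` with `d p b ∈ F`, which connectedness of `G(p)` allows. -/
theorem RauzyWalk.lift (hR : Recurrent F) (hConn : ConnectedSet F) {v v' : List A}
    {g : FreeGroup A} (hw : RauzyWalk F n v v' g) {a : A} (ha : a :: v ∈ F) :
    ∃ c, c :: v' ∈ F ∧ RauzyWalk F (n + 1) (a :: v) (c :: v') g := by
  induction hw with
  | refl _ hl => exact ⟨a, ha, .refl ha (by simp [hl])⟩
  | @fwd p g b hw hpb ih =>
    obtain ⟨c, hc, hwalk⟩ := ih
    obtain ⟨hpF, hpl⟩ := hw.target_mem hR.1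
    obtain ⟨d, hd⟩ := hR.exists_cons hpb (by simp)
    have hdp : d :: p ∈ F := hR.1 _ hd _ (List.prefix_append (d :: p) [b]).isInfix
    have hstep : RauzyWalk F (n + 1) (a :: v) (p ++ [b]) (g * .of b) := by
      simpa using (hwalk.trans (rauzyWalk_cons_cons hConn hR.1 hpF hpl hc hdp)).trans
        (RauzyWalk.edge hR.1 (p := d :: p) hd (by simp [hpl]))
    obtain ⟨c', t, hct⟩ := List.exists_cons_of_ne_nil (by simp : p ++ [b] ≠ [])
    rw [hct] at hstep hpb ⊢
    exact ⟨c', hpb, hstep⟩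
  | @bwd q g b hw hqb ih =>
    obtain ⟨c, hc, hwalk⟩ := ih
    obtain ⟨htF, htl⟩ := hw.target_mem hR.1
    obtain ⟨d, hd⟩ := hR.exists_cons hqb (by simp)
    have hback : RauzyWalk F (n + 1) (q ++ [b]) (d :: q) (.of b)⁻¹ :=
      RauzyWalk.edge_rev hR.1 (p := d :: q) hd (by simpa using htl)
    obtain ⟨c', t, hct⟩ := List.exists_cons_of_ne_nil (by simp : q ++ [b] ≠ [])
    rw [hct] at hc hwalk htF htl hqb hback
    refine ⟨d, hR.1 _ hd _ (List.prefix_append (d :: q) [b]).isInfix, ?_⟩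
    simpa using (hwalk.trans (rauzyWalk_cons_cons hConn hR.1 htF htl hc hqb)).trans hback

theorem rauzyWalk_loop (hR : Recurrent F) (hConn : ConnectedSet F) (hAlph : AlphabetIs F)
    {x : List A} (hx : x ∈ F) (hl : x.length = n) (g : FreeGroup A) : RauzyWalk F n x x g := by
  induction n generalizing x with
  | zero =>
    obtain rfl := List.eq_nil_of_length_eq_zero hl
    induction g with
    | C1 => exact .refl hx rfl
    | of a => exact RauzyWalk.edge hR.1 (p := []) (hAlph a) rfl
    | inv_of a _ => exact RauzyWalk.edge_rev hR.1 (p := []) (hAlph a) rfl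
    | mul g h hg hh => exact hg.trans hh
  | succ n ih =>
    obtain ⟨a, v, rfl⟩ := List.exists_cons_of_length_eq_add_one hl
    have hv : v ∈ F := hR.1 _ hx _ (List.suffix_cons a v).isInfix
    have hvl : v.length = n := by simpa using hl
    obtain ⟨c, hc, hw⟩ := (ih hv hvl).lift hR hConn hx
    simpa using hw.trans (rauzyWalk_cons_cons hConn hR.1 hv hvl hc hx)

end Lifting

/-- Once every vertex contains an occurrence of `u`, each edge `p b` contains occurrences ending
at both of its vertices, so its label is, up to return words, the difference of the two. -/
theorem RauzyWalk.mul_mul_inv_mem_returnSubgroup {F : Set (List A)} {n : ℕ} {u x x' y : List A}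
    {g : FreeGroup A} (hF : Factorial F) (hocc : ∀ w ∈ F, w.length = n → u <:+: w)
    (hw : RauzyWalk F n x x' g) (hy : u ++ y <:+ x) {y' : List A} (hy' : u ++ y' <:+ x') :
    toFreeGroup y * g * (toFreeGroup y')⁻¹ ∈ returnSubgroup F u := by
  induction hw generalizing y' with
  | refl hx _ => simpa using toFreeGroup_mul_inv_mem_returnSubgroup hF hx hy hy'
  | @fwd p g b hw hpb ih =>
    obtain ⟨hpF, hpl⟩ := hw.target_mem hF
    obtain ⟨s, t, rfl⟩ := hocc p hpF hpl
    have hmid := toFreeGroup_mul_inv_mem_returnSubgroup hF hpb (y := t ++ [b])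
      ⟨s, by simp⟩ (hy'.trans (List.tail_suffix _))
    convert mul_mem (ih (y' := t) ⟨s, by simp⟩) hmid using 1
    simp only [toFreeGroup_append, toFreeGroup_singleton]
    group
  | @bwd q g b hw hqb ih =>
    obtain ⟨htF, htl⟩ := hw.target_mem hF
    obtain ⟨s, t, hst⟩ := hocc _ htF htl
    have hut : u ++ t <:+ (q ++ [b]).tail := ⟨s, by rw [← hst, List.append_assoc]⟩
    have hmid := toFreeGroup_mul_inv_mem_returnSubgroup hF hqb (y' := y' ++ [b])
      (hut.trans (List.tail_suffix _)) (by simpa using List.suffix_append_self_iff.2 hy')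
    convert mul_mem (ih hut) hmid using 1
    simp only [toFreeGroup_append, toFreeGroup_singleton]
    group

end PaperDefs

open PaperDefs in
theorem stmt_12_general {A : Type}
    (F : Set (List A)) (hF : UniformlyRecurrent F)
    (hConn : ConnectedSet F) (hAlph : AlphabetIs F)
    (u : List A) (hu : u ∈ F) :
    Subgroup.closure
      ((fun w : List A => (w.map (FreeGroup.of)).prod) '' ReturnWords F u) = ⊤ := by
  obtain ⟨N, hN⟩ := hF.2 u hu
  obtain ⟨x, hx, hux, hNx⟩ := hF.1.exists_suffix_le_length hu N
  have hocc : ∀ w ∈ F, w.length = x.length → u <:+: w := fun w hw hl => hN w hw (by omega)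
  rw [Subgroup.eq_top_iff']
  intro g
  have hux' : u ++ [] <:+ x := by simpa using hux
  show g ∈ returnSubgroup F u
  simpa using
    (rauzyWalk_loop hF.1 hConn hAlph hx rfl g).mul_mul_inv_mem_returnSubgroup hF.1.1 hocc hux' hux'

open PaperDefs in
theorem stmt_12 {A : Type} [Fintype A]
    (F : Set (List A)) (hF : UniformlyRecurrent F)
    (hConn : ConnectedSet F) (hAlph : AlphabetIs F)
    (u : List A) (hu : u ∈ F) :
    Subgroup.closure
      ((fun w : List A => (w.map (FreeGroup.of)).prod) '' ReturnWords F u) = ⊤ :=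
  stmt_12_general F hF hConn hAlph u hu
end
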